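/- Let (S,p) be a transition probability space and let ≈ denote the equivalence closure (reflexive–symmetric–transitive closure) of the relation a ~ b ⇔ p(a,b) ≠ 0. Then: (i) if a ≈ b fails then p(a,b) = 0, so distinct equivalence classes are mutually orthogonal; (ii) every equivalence class C, with p restricted to C × C, is itself a transition probability space — in particular, for every maximal pairwise orthogonal subset R_C of C and every a ∈ C, the family (p(a,r))_{r∈R_C} is summable with sum 1; (iii) no equivalence class C admits a partition into two nonempty subsets A and B with p(a,b) = 0 for all a ∈ A and b ∈ B. Hence every transition probability space is the disjoint union of irreducible, mutually orthogonal subspaces (superselection sectors). -/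
import Mathlib


/-- A subset whose distinct elements are pairwise orthogonal (`p a b = 0`). -/
def IsOrthogonalSet {S : Type*} (p : S → S → ℝ) (R : Set S) : Prop :=
  ∀ a ∈ R, ∀ b ∈ R, a ≠ b → p a b = 0

/-- A basis: a maximal pairwise orthogonal subset. -/
def IsBasisTPS {S : Type*} (p : S → S → ℝ) (R : Set S) : Prop :=
  IsOrthogonalSet p R ∧ ∀ T : Set S, R ⊆ T → IsOrthogonalSet p T → T = R

/-- A transition probability space. -/
def IsTPS {S : Type*} (p : S → S → ℝ) : Prop :=
  (∀ a b : S, 0 ≤ p a b) ∧ (∀ a b : S, p a b ≤ 1) ∧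
  (∀ a b : S, p a b = 1 ↔ a = b) ∧
  (∀ a b : S, p a b = p b a) ∧
  (∀ R : Set S, IsBasisTPS p R → ∀ a : S, HasSum (fun r : R => p a r.1) 1)

/-- Any orthogonal set extends to a basis (Zorn). -/
lemma exists_basis_extending {S : Type*} (p : S → S → ℝ) (R : Set S)
    (hR : IsOrthogonalSet p R) : ∃ M, R ⊆ M ∧ IsBasisTPS p M := by
  obtain ⟨M, hRM, hMmem, hMmax⟩ := zorn_subset_nonempty {T | IsOrthogonalSet p T}
    (fun c hc hchain _ => by
      refine ⟨⋃₀ c, ?_, fun s hs => Set.subset_sUnion_of_mem hs⟩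
      rintro x ⟨s, hs, hxs⟩ y ⟨t, ht, hyt⟩ hxy
      rcases hchain.total hs ht with h | h
      · exact hc ht x (h hxs) y hyt hxy
      · exact hc hs x hxs y (h hyt) hxy) R hR
  exact ⟨M, hRM, hMmem, fun T hMT hT => Set.Subset.antisymm (hMmax hT hMT) hMT⟩

/-- Decomposition into superselection sectors: taking `≈` to be the equivalence
closure of `a ~ b ⇔ p(a,b) ≠ 0`, (i) states in different equivalence classes are
orthogonal, (ii) each equivalence class with the restricted `p` is itself a
transition probability space, and (iii) no equivalence class splits into two
nonempty mutually orthogonal pieces (irreducibility). -/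
theorem tps_superselection_sectors {S : Type*} (p : S → S → ℝ) (hTPS : IsTPS p) :
    (∀ a b : S, ¬ Relation.EqvGen (fun x y : S => p x y ≠ 0) a b → p a b = 0) ∧
    (∀ a : S,
      IsTPS (fun x y : {b : S // Relation.EqvGen (fun x y : S => p x y ≠ 0) a b} =>
        p x.1 y.1)) ∧
    (∀ a : S, ¬ ∃ A B : Set S,
      A ∪ B = {b : S | Relation.EqvGen (fun x y : S => p x y ≠ 0) a b} ∧
      A.Nonempty ∧ B.Nonempty ∧ A ∩ B = ∅ ∧
      ∀ x ∈ A, ∀ y ∈ B, p x y = 0) := by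
  obtain ⟨hnn, hle, heq, hsymm, hsum⟩ := hTPS
  set rel : S → S → Prop := fun x y => p x y ≠ 0 with hrel
  -- (i)
  have part1 : ∀ a b : S, ¬ Relation.EqvGen rel a b → p a b = 0 := by
    intro a b h
    by_contra hp
    exact h (Relation.EqvGen.rel a b hp)
  -- orthogonality across a class boundary
  have cross : ∀ a x t : S, Relation.EqvGen rel a x → ¬ Relation.EqvGen rel a t →
      p x t = 0 := by
    intro a x t hax hat
    by_contra hp
    exact hat (Relation.EqvGen.trans _ _ _ hax (Relation.EqvGen.rel x t hp))
  refine ⟨part1, ?_, ?_⟩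
  · -- (ii)
    intro a
    refine ⟨fun x y => hnn _ _, fun x y => hle _ _, ?_, fun x y => hsymm _ _, ?_⟩
    · intro x y
      constructor
      · intro h; exact Subtype.ext ((heq _ _).1 h)
      · intro h; subst h; exact (heq _ _).2 rfl
    · intro R hR x
      set C : Set S := {b | Relation.EqvGen rel a b} with hC
      set R' : Set S := Subtype.val '' R with hR'
      have hR'orth : IsOrthogonalSet p R' := by
        rintro _ ⟨u, hu, rfl⟩ _ ⟨v, hv, rfl⟩ hne
        exact hR.1 u hu v hv (fun h => hne (by rw [h]))
      obtain ⟨M, hR'M, hMorth, hMmax⟩ := exists_basis_extending p R' hR'orth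
      -- extra elements of M are orthogonal to x
      have hextra : ∀ m ∈ M, m ∉ R' → p x.1 m = 0 := by
        intro m hmM hmR'
        by_cases hmC : Relation.EqvGen rel a m
        · exfalso
          have horth : IsOrthogonalSet
              (fun u v : {b : S // Relation.EqvGen rel a b} => p u.1 v.1)
              (insert ⟨m, hmC⟩ R) := by
            rintro u hu v hv hne
            rcases hu with rfl | hu <;> rcases hv with rfl | hv
            · exact absurd rfl hne
            · exact hMorth m hmM v.1 (hR'M ⟨v, hv, rfl⟩)
                (fun h => hmR' ⟨v, hv, h.symm⟩)
            · exact hMorth u.1 (hR'M ⟨u, hu, rfl⟩) m hmM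
                (fun h => hmR' ⟨u, hu, h⟩)
            · exact hR.1 u hu v hv hne
          have := hR.2 _ (Set.subset_insert _ _) horth
          have hmem : (⟨m, hmC⟩ : {b : S // Relation.EqvGen rel a b}) ∈ R := by
            rw [← this]; exact Set.mem_insert _ _
          exact hmR' ⟨⟨m, hmC⟩, hmem, rfl⟩
        · exact cross a x.1 m x.2 hmC
      have hsumM : HasSum (fun r : M => p x.1 r.1) 1 :=
        hsum M ⟨hMorth, hMmax⟩ x.1
      have hindM : HasSum (M.indicator (p x.1)) 1 :=
        hasSum_subtype_iff_indicator.1 hsumM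
      have hind_eq : M.indicator (p x.1) = R'.indicator (p x.1) := by
        funext s
        by_cases hsR' : s ∈ R'
        · rw [Set.indicator_of_mem (hR'M hsR'), Set.indicator_of_mem hsR']
        · rw [Set.indicator_of_notMem hsR']
          by_cases hsM : s ∈ M
          · rw [Set.indicator_of_mem hsM]; exact hextra s hsM hsR'
          · rw [Set.indicator_of_notMem hsM]
      rw [hind_eq] at hindM
      have hsumR' : HasSum (fun r : R' => p x.1 r.1) 1 :=
        hasSum_subtype_iff_indicator.2 hindM
      have hfin := ((Equiv.Set.image Subtype.val R
        Subtype.val_injective).hasSum_iff (f := fun r : R' => p x.1 r.1)).2 hsumR'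
      have hcomp : ((fun r : R' => p x.1 r.1) ∘ (Equiv.Set.image Subtype.val R
          Subtype.val_injective)) = fun r : R => p x.1 r.1.1 := by
        funext r
        simp [Equiv.Set.image, Equiv.Set.imageOfInjOn]
      rw [hcomp] at hfin
      exact hfin
  · -- (iii)
    rintro a ⟨A, B, hUnion, ⟨xA, hxA⟩, ⟨yB, hyB⟩, hAB, horth⟩
    have key : ∀ u v : S, Relation.EqvGen rel u v → Relation.EqvGen rel a u →
        (u ∈ A ↔ v ∈ A) := by
      intro u v h
      induction h with
      | rel u v hr =>
        intro hau
        have hav : Relation.EqvGen rel a v := Relation.EqvGen.trans _ _ _ hau (Relation.EqvGen.rel u v hr)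
        have huAB : u ∈ A ∪ B := by rw [hUnion]; exact hau
        have hvAB : v ∈ A ∪ B := by rw [hUnion]; exact hav
        constructor
        · intro huA
          rcases hvAB with hvA | hvB
          · exact hvA
          · exact absurd (horth u huA v hvB) hr
        · intro hvA
          rcases huAB with huA | huB
          · exact huA
          · exact absurd ((hsymm u v).trans (horth v hvA u huB)) hr
      | refl u => intro _; rfl
      | symm u v h ih =>
        intro hav
        exact (ih (Relation.EqvGen.trans _ _ _ hav (Relation.EqvGen.symm _ _ h))).symm
      | trans u w v h1 h2 ih1 ih2 =>
        intro hau
        exact (ih1 hau).trans (ih2 (Relation.EqvGen.trans _ _ _ hau h1))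
    have haxA : Relation.EqvGen rel a xA := by
      have : xA ∈ A ∪ B := Or.inl hxA
      rwa [hUnion] at this
    have hayB : Relation.EqvGen rel a yB := by
      have : yB ∈ A ∪ B := Or.inr hyB
      rwa [hUnion] at this
    have hxy : Relation.EqvGen rel xA yB :=
      Relation.EqvGen.trans _ _ _ (Relation.EqvGen.symm _ _ haxA) hayB
    have hyA : yB ∈ A := (key xA yB hxy haxA).1 hxA
    have : yB ∈ A ∩ B := ⟨hyA, hyB⟩
    rw [hAB] at this
    exact this
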